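/- There exists a small set A ⊆ 2^ω × 2^ω such that for every Silver tree S ⊆ 2^{<ω} the set (A ∩ ([S] × [S])) \ Δ is nonempty, where Δ = {(x,x) : x ∈ 2^ω}. Concretely, identifying 2^ω × 2^ω with the space of functions ω × ω → 2, there exist a partition 𝒜 of ω × ω into finite sets and a family (J_a)_{a ∈ 𝒜} with J_a ⊆ 2^a and Σ_{a ∈ 𝒜} |J_a| / 2^{|a|} < ∞ such that A = {z : there exist infinitely many a ∈ 𝒜 with z↾a ∈ J_a} has this property. -/

import Mathlib

open Set

/-- `T` is a tree on `2`: a set of finite binary sequences closed under initial segments. -/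
def IsTree2 (T : Set (List Bool)) : Prop := ∀ σ ∈ T, ∀ n : ℕ, σ.take n ∈ T

/-- The body of a tree: all infinite binary sequences all of whose initial segments lie in `T`. -/
def body2 (T : Set (List Bool)) : Set (ℕ → Bool) :=
  {x | ∀ n : ℕ, List.ofFn (fun i : Fin n => x i) ∈ T}

/-- `σ` is a splitting node of `T`: both immediate successors of `σ` lie in `T`. -/
def Splits2 (T : Set (List Bool)) (σ : List Bool) : Prop :=
  σ ++ [false] ∈ T ∧ σ ++ [true] ∈ T

/-- `T` is a perfect tree on `2`: a nonempty tree in which every node has a splitting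
extension in `T`. -/
def IsPerfectTree2 (T : Set (List Bool)) : Prop :=
  T.Nonempty ∧ IsTree2 T ∧ ∀ σ ∈ T, ∃ τ ∈ T, σ <+: τ ∧ Splits2 T τ

/-- `T` is a Silver tree: a perfect tree such that nodes of equal length have the same
immediate successor extensions. -/
def IsSilverTree2 (T : Set (List Bool)) : Prop :=
  IsPerfectTree2 T ∧
    ∀ σ ∈ T, ∀ τ ∈ T, σ.length = τ.length → ∀ a : Bool, (σ ++ [a] ∈ T ↔ τ ++ [a] ∈ T)

/-- The diagonal of the square of Cantor space. -/
def diag2 : Set ((ℕ → Bool) × (ℕ → Bool)) := {p | p.1 = p.2}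

/-- The identification of `2^ω × 2^ω` with the space `2^(ω × ω)` of functions `ω × ω → 2`. -/
noncomputable def pairEquiv : ((ℕ → Bool) × (ℕ → Bool)) ≃ ((ℕ × ℕ) → Bool) :=
  (Equiv.sumArrowEquivProdArrow ℕ ℕ Bool).symm.trans
    (Equiv.arrowCongr ((Denumerable.eqv (ℕ ⊕ ℕ)).trans (Denumerable.eqv (ℕ × ℕ)).symm)
      (Equiv.refl Bool))

/-- `A ⊆ 2^(ω × ω)` is a small set: there are a partition `𝒜` of `ω × ω` into finite
(nonempty) sets and a family `(J_a)_{a ∈ 𝒜}` with `J_a ⊆ 2^a` and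
`Σ_{a ∈ 𝒜} |J_a| / 2^{|a|} < ∞`, such that `A` is exactly the set of all `z` whose
restriction `z ↾ a` belongs to `J_a` for infinitely many `a ∈ 𝒜`. -/
def IsSmall (A : Set ((ℕ × ℕ) → Bool)) : Prop :=
  ∃ (𝒜 : Set (Set (ℕ × ℕ))) (J : (a : Set (ℕ × ℕ)) → Set (↥a → Bool)),
    (∀ a ∈ 𝒜, a.Finite) ∧ (∀ a ∈ 𝒜, a.Nonempty) ∧
    (𝒜.PairwiseDisjoint id) ∧ (⋃₀ 𝒜 = univ) ∧
    Summable (fun a : 𝒜 => (Nat.card (J a.1) : ℝ) / 2 ^ (a.1.ncard)) ∧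
    A = {z | {a ∈ 𝒜 | (fun i : a => z i) ∈ J a}.Infinite}

namespace SilverAux


noncomputable def gE : (ℕ ⊕ ℕ) ≃ (ℕ × ℕ) :=
  (Denumerable.eqv (ℕ ⊕ ℕ)).trans (Denumerable.eqv (ℕ × ℕ)).symm

def c (n : ℕ) : ℕ := Nat.log 2 (n + 1)

noncomputable def idx (p : ℕ × ℕ) : ℕ := Sum.elim c c (gE.symm p)

noncomputable def blk (k : ℕ) : Set (ℕ × ℕ) := idx ⁻¹' {k}

def Iset (k : ℕ) : Set ℕ := {n | c n = k}

lemma Iset_eq (k : ℕ) : Iset k = Set.Ico (2 ^ k - 1) (2 ^ (k + 1) - 1) := by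
  ext n
  simp only [Iset, mem_setOf_eq, Set.mem_Ico]
  constructor
  · rintro rfl
    have h1 := Nat.pow_log_le_self 2 (x := n + 1) (by omega)
    have h2 := Nat.lt_pow_succ_log_self (b := 2) (by norm_num) (n + 1)
    unfold c
    omega
  · rintro ⟨h1, h2⟩
    have hp : (1:ℕ) ≤ 2 ^ k := Nat.one_le_two_pow
    exact Nat.log_eq_of_pow_le_of_lt_pow (by omega) (by omega)

lemma Iset_ncard (k : ℕ) : (Iset k).ncard = 2 ^ k := by
  rw [Iset_eq, ← Finset.coe_Ico, Set.ncard_coe_finset, Nat.card_Ico]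
  have : (1:ℕ) ≤ 2 ^ k := Nat.one_le_two_pow
  have h2 : (2:ℕ) ^ (k+1) = 2 * 2 ^ k := by rw [pow_succ]; ring
  omega

lemma c_mem_Iset (k : ℕ) : 2 ^ k - 1 ∈ Iset k := by
  have : (2:ℕ) ^ k - 1 + 1 = 2 ^ k := by
    have : (1:ℕ) ≤ 2 ^ k := Nat.one_le_two_pow
    omega
  simp only [Iset, mem_setOf_eq, c, this]
  exact Nat.log_pow (by norm_num) k

lemma mem_blk_inl {i k : ℕ} : gE (Sum.inl i) ∈ blk k ↔ c i = k := by
  simp [blk, idx]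

lemma mem_blk_inr {i k : ℕ} : gE (Sum.inr i) ∈ blk k ↔ c i = k := by
  simp [blk, idx]

lemma blk_eq_image (k : ℕ) :
    blk k = gE '' (Sum.inl '' Iset k ∪ Sum.inr '' Iset k) := by
  ext p
  obtain ⟨s, rfl⟩ : ∃ s, gE s = p := ⟨gE.symm p, gE.apply_symm_apply p⟩
  rw [gE.injective.mem_set_image]
  cases s with
  | inl i => simp [mem_blk_inl, Iset]
  | inr i => simp [mem_blk_inr, Iset]

lemma Iset_finite (k : ℕ) : (Iset k).Finite := by
  rw [Iset_eq]; exact Set.finite_Ico _ _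

lemma blk_finite (k : ℕ) : (blk k).Finite := by
  rw [blk_eq_image]
  exact (((Iset_finite k).image _).union ((Iset_finite k).image _)).image _

lemma blk_nonempty (k : ℕ) : (blk k).Nonempty :=
  ⟨gE (Sum.inl (2 ^ k - 1)), mem_blk_inl.mpr (c_mem_Iset k)⟩

lemma blk_disjoint {k j : ℕ} (h : k ≠ j) : Disjoint (blk k) (blk j) := by
  rw [Set.disjoint_left]
  rintro p hk hj
  exact h (hk.symm.trans hj)

lemma blk_injective : Function.Injective blk := by
  intro k j h
  by_contra hne
  obtain ⟨p, hp⟩ := blk_nonempty k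
  exact (blk_disjoint hne).le_bot ⟨hp, h ▸ hp⟩

lemma blk_ncard (k : ℕ) : (blk k).ncard = 2 ^ (k + 1) := by
  rw [blk_eq_image, Set.ncard_image_of_injective _ gE.injective,
    Set.ncard_union_eq (by rw [Set.disjoint_left]; rintro _ ⟨a, _, rfl⟩ ⟨b, _, h⟩; simp at h)
      ((Iset_finite k).image _) ((Iset_finite k).image _),
    Set.ncard_image_of_injective _ Sum.inl_injective,
    Set.ncard_image_of_injective _ Sum.inr_injective, Iset_ncard]
  ring

def J (a : Set (ℕ × ℕ)) : Set (↥a → Bool) :=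
  {w | ∀ i : ℕ, ∀ (h1 : gE (Sum.inl i) ∈ a) (h2 : gE (Sum.inr i) ∈ a),
    w ⟨gE (Sum.inl i), h1⟩ = w ⟨gE (Sum.inr i), h2⟩}

lemma card_J_blk_le (k : ℕ) : Nat.card (J (blk k)) ≤ 2 ^ 2 ^ k := by
  haveI : Finite ↥(Iset k) := (Iset_finite k).to_subtype
  have hinj : Function.Injective
      (fun (w : ↥(J (blk k))) (i : ↥(Iset k)) =>
        w.1 ⟨gE (Sum.inl i.1), mem_blk_inl.mpr i.2⟩) := by
    intro w w' h
    ext ⟨p, hp⟩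
    obtain ⟨s, rfl⟩ : ∃ s, gE s = p := ⟨gE.symm p, gE.apply_symm_apply p⟩
    cases s with
    | inl i =>
        have hi : i ∈ Iset k := mem_blk_inl.mp hp
        exact congrFun h ⟨i, hi⟩
    | inr i =>
        have hi : i ∈ Iset k := mem_blk_inr.mp hp
        have h1 : gE (Sum.inl i) ∈ blk k := mem_blk_inl.mpr hi
        rw [← w.2 i h1 hp, ← w'.2 i h1 hp]
        exact congrFun h ⟨i, hi⟩
  calc Nat.card (J (blk k)) ≤ Nat.card (↥(Iset k) → Bool) :=
        Nat.card_le_card_of_injective _ hinj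
    _ = 2 ^ 2 ^ k := by
        rw [Nat.card_fun, Nat.card_eq_fintype_card, Fintype.card_bool,
          Nat.card_coe_set_eq, Iset_ncard]

lemma summable_blk :
    Summable (fun a : ↥(Set.range blk) =>
      (Nat.card (J a.1) : ℝ) / 2 ^ (a.1.ncard)) := by
  rw [← (Equiv.ofInjective blk blk_injective).summable_iff]
  refine Summable.of_nonneg_of_le (fun k => ?_) (fun k => ?_)
    (summable_geometric_of_lt_one (r := (1:ℝ)/2) (by norm_num) (by norm_num))
  · show (0:ℝ) ≤ (Nat.card (J (blk k)) : ℝ) / 2 ^ ((blk k).ncard)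
    positivity
  · show (Nat.card (J (blk k)) : ℝ) / 2 ^ ((blk k).ncard) ≤ (1/2) ^ k
    rw [blk_ncard]
    have h1 : ((Nat.card (J (blk k)) : ℝ)) ≤ 2 ^ 2 ^ k := by
      exact_mod_cast card_J_blk_le k
    have h2 : ((2:ℝ)) ^ 2 ^ (k+1) = 2 ^ 2 ^ k * 2 ^ 2 ^ k := by
      rw [← pow_add]
      congr 1
      rw [pow_succ]; ring
    calc (Nat.card (J (blk k)) : ℝ) / 2 ^ 2 ^ (k+1)
        ≤ (2 ^ 2 ^ k : ℝ) / 2 ^ 2 ^ (k+1) := by gcongr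
      _ = (1/2) ^ 2 ^ k := by
          rw [h2, one_div, inv_pow]
          field_simp
      _ ≤ (1/2) ^ k :=
          pow_le_pow_of_le_one (by norm_num) (by norm_num) (Nat.lt_two_pow_self (n := k)).le

lemma exists_succ_mem {S : Set (List Bool)} (hS : IsPerfectTree2 S) {σ : List Bool}
    (h : σ ∈ S) : ∃ b : Bool, σ ++ [b] ∈ S := by
  obtain ⟨τ, hτ, hpre, hsp⟩ := hS.2.2 σ h
  have h1 : (τ ++ [false]).take (σ.length + 1) ∈ S := hS.2.1 _ hsp.1 _
  have h2 : σ <+: (τ ++ [false]).take (σ.length + 1) :=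
    List.prefix_take_iff.mpr ⟨hpre.trans (List.prefix_append _ _), by omega⟩
  have h3 : ((τ ++ [false]).take (σ.length + 1)).length = σ.length + 1 := by
    rw [List.length_take, List.length_append]
    have := hpre.length_le
    simp; omega
  obtain ⟨t, ht⟩ := h2
  have hlt : t.length = 1 := by
    have := congrArg List.length ht
    rw [List.length_append] at this
    omega
  match t, hlt with
  | [b], _ =>
    rw [← ht] at h1
    exact ⟨b, h1⟩

lemma exists_branch {S : Set (List Bool)} (hS : IsPerfectTree2 S) {σ₀ : List Bool}
    (h₀ : σ₀ ∈ S) :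
    ∃ x : ℕ → Bool, x ∈ body2 S ∧ List.ofFn (fun i : Fin σ₀.length => x i) = σ₀ := by
  have step : ∀ l : {l : List Bool // l ∈ S}, ∃ b : Bool, l.1 ++ [b] ∈ S :=
    fun l => exists_succ_mem hS l.2
  choose nb hnb using step
  let f : ℕ → {l : List Bool // l ∈ S} := fun n =>
    Nat.rec ⟨σ₀, h₀⟩ (fun _ p => ⟨p.1 ++ [nb p], hnb p⟩) n
  have hfsucc : ∀ n, (f (n + 1)).1 = (f n).1 ++ [nb (f n)] := fun n => rfl
  have hf0 : (f 0).1 = σ₀ := rfl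
  have hlen : ∀ n, (f n).1.length = σ₀.length + n := by
    intro n
    induction n with
    | zero => simp [hf0]
    | succ m ih => rw [hfsucc, List.length_append, ih]; simp; omega
  have hchain : ∀ m n, m ≤ n → (f m).1 <+: (f n).1 := by
    intro m n
    induction n with
    | zero => intro h; rw [Nat.le_zero.mp h]
    | succ p ih =>
        intro h
        rcases Nat.lt_or_ge m (p + 1) with h' | h'
        · exact (ih (by omega)).trans (by rw [hfsucc]; exact List.prefix_append _ _)
        · have hm : m = p + 1 := by omega
          rw [hm]
  set x : ℕ → Bool := fun n => (f (n + 1)).1.getD n false with hxdef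
  have hofFn : ∀ n, List.ofFn (fun i : Fin n => x i) = (f n).1.take n := by
    intro n
    apply List.ext_getElem
    · simp [List.length_take, hlen]
    · intro i h1 h2
      simp only [List.getElem_ofFn]
      rw [List.getElem_take]
      have hi : i < n := by simpa using h1
      have hvalid : i < (f (i + 1)).1.length := by have := hlen (i + 1); omega
      show x i = _
      rw [hxdef]
      simp only []
      rw [List.getD_eq_getElem _ _ hvalid]
      exact (hchain (i + 1) n hi).getElem hvalid
  refine ⟨x, ?_, ?_⟩
  · intro n
    rw [hofFn]
    exact hS.2.1 _ (f n).2 n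
  · rw [hofFn]
    obtain ⟨t, ht⟩ : σ₀ <+: (f σ₀.length).1 := hf0 ▸ hchain 0 σ₀.length (Nat.zero_le _)
    rw [← ht]
    simp

lemma ofFn_snoc (z : ℕ → Bool) (m : ℕ) :
    List.ofFn (fun i : Fin (m + 1) => z i) = List.ofFn (fun i : Fin m => z i) ++ [z m] := by
  rw [List.ofFn_succ']
  simp [List.concat_eq_append]

lemma flip_mem_body {S : Set (List Bool)} (hS : IsSilverTree2 S) {x : ℕ → Bool}
    (hx : x ∈ body2 S) (n : ℕ)
    (h : (List.ofFn (fun i : Fin n => x i)) ++ [true] ∈ S) :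
    (fun i => if i = n then true else x i) ∈ body2 S := by
  set y : ℕ → Bool := fun i => if i = n then true else x i with hy
  have hyx : ∀ i, i ≠ n → y i = x i := by intro i hi; simp [hy, hi]
  intro k
  induction k with
  | zero => simpa using hS.1.2.1 _ (hx 0) 0
  | succ m ih =>
      rcases lt_trichotomy m n with hm | hm | hm
      · have he : (fun i : Fin (m + 1) => y i) = (fun i : Fin (m + 1) => x i) := by
          funext i
          exact hyx i (by omega)
        rw [he]
        exact hx (m + 1)
      · subst hm
        rw [ofFn_snoc]
        have h1 : List.ofFn (fun i : Fin m => y i) = List.ofFn (fun i : Fin m => x i) := by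
          congr 1
          funext i
          exact hyx i (by omega)
        have h2 : y m = true := by simp [hy]
        rw [h1, h2]
        exact h
      · rw [ofFn_snoc, hyx m (by omega)]
        have hxm : List.ofFn (fun i : Fin m => x i) ++ [x m] ∈ S := by
          rw [← ofFn_snoc]; exact hx (m + 1)
        exact (hS.2 _ (hx m) _ ih (by simp) (x m)).mp hxm

lemma mem_J_blk (x y : ℕ → Bool) (k : ℕ) :
    ((fun i : ↥(blk k) => pairEquiv (x, y) i.1) ∈ J (blk k)) ↔
      ∀ i : ℕ, c i = k → x i = y i := by
  have hval : ∀ s : ℕ ⊕ ℕ, pairEquiv (x, y) (gE s) = Sum.elim x y s := by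
    intro s
    show Sum.elim x y (gE.symm (gE s)) = _
    rw [Equiv.symm_apply_apply]
  constructor
  · intro h i hi
    have := h i (mem_blk_inl.mpr hi) (mem_blk_inr.mpr hi)
    simpa [hval] using this
  · intro h i h1 h2
    show pairEquiv (x, y) (gE (Sum.inl i)) = pairEquiv (x, y) (gE (Sum.inr i))
    rw [hval, hval]
    exact h i (mem_blk_inl.mp h1)

end SilverAux

/-- There is a small set `A ⊆ 2^ω × 2^ω` (under the identification of `2^ω × 2^ω` with
`2^(ω × ω)`) meeting `([S] × [S]) \ Δ` for every Silver tree `S`. -/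
theorem small_set_meeting_silver_squares :
    ∃ A : Set ((ℕ → Bool) × (ℕ → Bool)), IsSmall (pairEquiv '' A) ∧
      ∀ S : Set (List Bool), IsSilverTree2 S →
        ((A ∩ (body2 S ×ˢ body2 S)) \ diag2).Nonempty := by
  classical
  open SilverAux in
  refine ⟨pairEquiv ⁻¹' {z | {a ∈ Set.range blk | (fun i : a => z i) ∈ J a}.Infinite}, ?_, ?_⟩
  · refine ⟨Set.range blk, J, ?_, ?_, ?_, ?_, summable_blk, ?_⟩
    · rintro a ⟨k, rfl⟩; exact blk_finite k
    · rintro a ⟨k, rfl⟩; exact blk_nonempty k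
    · rintro a ⟨k, rfl⟩ b ⟨j, rfl⟩ hne
      exact blk_disjoint (fun h => hne (by rw [h]))
    · ext p
      simp only [Set.mem_sUnion, Set.mem_univ, iff_true]
      exact ⟨blk (idx p), ⟨idx p, rfl⟩, rfl⟩
    · rw [Set.image_preimage_eq _ pairEquiv.surjective]
  · intro S hS
    obtain ⟨σ₀, hσ₀⟩ := hS.1.1
    obtain ⟨τ, hτ, hpre, hsp⟩ := hS.1.2.2 σ₀ hσ₀
    obtain ⟨x, hx, hofn⟩ := exists_branch hS.1 hsp.1
    set n := τ.length with hn
    have hxi : ∀ i (hi : i < (τ ++ [false]).length), x i = (τ ++ [false])[i] := by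
      intro i hi
      have h1 : i < (List.ofFn fun j : Fin (τ ++ [false]).length => x j).length := by
        simpa using hi
      have h2 := List.getElem_of_eq hofn h1
      rw [List.getElem_ofFn] at h2
      exact h2
    have hxn : x n = false := by
      have h := hxi n (by simp [hn])
      simpa [hn, List.getElem_concat_length] using h
    have hofn2 : List.ofFn (fun i : Fin n => x i) = τ := by
      apply List.ext_getElem
      · simp [hn]
      · intro i h1 h2
        have hi : i < τ.length := by simpa using h2
        rw [List.getElem_ofFn]
        have h3 := hxi i (by simp; omega)
        rw [List.getElem_append_left hi] at h3
        exact h3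
    set y : ℕ → Bool := fun i => if i = n then true else x i with hy
    have hyb : y ∈ body2 S := by
      rw [hy]
      exact flip_mem_body hS hx n (by rw [hofn2]; exact hsp.2)
    refine ⟨(x, y), ⟨?_, hx, hyb⟩, ?_⟩
    · simp only [Set.mem_preimage, Set.mem_setOf_eq]
      refine Set.Infinite.mono ?_
        (((Set.finite_singleton (c n)).infinite_compl).image blk_injective.injOn)
      rintro a ⟨k, hk, rfl⟩
      refine ⟨⟨k, rfl⟩, ?_⟩
      rw [mem_J_blk]
      intro i hi
      have : i ≠ n := fun h => hk (by rw [Set.mem_singleton_iff, ← hi, h])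
      simp [hy, this]
    · intro hd
      have hxy : x = y := hd
      have := congrFun hxy n
      rw [hxn, hy] at this
      simp at this
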